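/- Let W be a model of ZFC⁻ satisfying every instance of the DC_δ-scheme for a regular cardinal δ of W, and let P be a class partial order of W (a class of W equipped with a class partial ordering) such that every antichain of P that is a set of W has cardinality less than δ in W. Then every dense subclass D of P contains a set of W that is a maximal antichain of P; in particular, P is pretame. -/

import Mathlib

open FirstOrder Language

/-- The language of set theory: one binary relation symbol `∈`. -/
def setLang : FirstOrder.Language :=
  ⟨fun _ => Empty, fun n => match n with | 2 => Unit | _ => Empty⟩

/-- The `setLang`-structure on a type `W` induced by a binary relation `E`. -/
def memStruc (W : Type*) (E : W → W → Prop) : setLang.Structure W where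
  funMap := fun f _ => f.elim
  RelMap := fun {n} r xs =>
    match n, r, xs with
    | 2, _, xs => E (xs 0) (xs 1)

/-- Satisfaction of a formula of the language of set theory in `(W, E)`,
with free variables interpreted by `xs`. -/
def Sat {W : Type*} (E : W → W → Prop) {n : ℕ} (φ : setLang.BoundedFormula Empty n)
    (xs : Fin n → W) : Prop :=
  @FirstOrder.Language.BoundedFormula.Realize setLang W (memStruc W E) Empty n φ Empty.elim xs

section Defs

variable {W : Type*}

/-- `x` is a transitive set. -/
def IsTransSet (E : W → W → Prop) (x : W) : Prop :=
  ∀ y, E y x → ∀ z, E z y → E z x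

/-- `x` is an ordinal: a transitive set linearly preordered by `E` (the standard
definition in the presence of foundation). -/
def IsOrd (E : W → W → Prop) (x : W) : Prop :=
  IsTransSet E x ∧ ∀ u v, E u x → E v x → (E u v ∨ u = v ∨ E v u)

/-- `p` is the unordered pair `{a, b}`. -/
def IsUPair (E : W → W → Prop) (a b p : W) : Prop :=
  ∀ z, E z p ↔ (z = a ∨ z = b)

/-- `p` is the Kuratowski ordered pair `⟨a, b⟩`. -/
def IsOPair (E : W → W → Prop) (a b p : W) : Prop :=
  ∃ s t, IsUPair E a a s ∧ IsUPair E a b t ∧ IsUPair E s t p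

/-- The ordered pair `⟨u, v⟩` is a member of `r`. -/
def OPairMem (E : W → W → Prop) (r u v : W) : Prop :=
  ∃ p, E p r ∧ IsOPair E u v p

/-- `f` is a (set) function with domain `d`. -/
def IsFuncOn (E : W → W → Prop) (f d : W) : Prop :=
  (∀ p, E p f → ∃ u v, E u d ∧ IsOPair E u v p) ∧
  (∀ u, E u d → ∃ v, OPairMem E f u v) ∧
  (∀ u v v', OPairMem E f u v → OPairMem E f u v' → v = v')

/-- `f(u) = v`. -/
def FunApp (E : W → W → Prop) (f u v : W) : Prop := OPairMem E f u v

/-- all values of `f` are members of `y`. -/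
def MapsInto (E : W → W → Prop) (f y : W) : Prop :=
  ∀ u v, OPairMem E f u v → E v y

/-- `f` is an injection of `x` into `y`. -/
def IntInj (E : W → W → Prop) (f x y : W) : Prop :=
  IsFuncOn E f x ∧ MapsInto E f y ∧
  ∀ u u' v, OPairMem E f u v → OPairMem E f u' v → u = u'

/-- `f` is a surjection of `x` onto `y`. -/
def IntSurj (E : W → W → Prop) (f x y : W) : Prop :=
  IsFuncOn E f x ∧ MapsInto E f y ∧ ∀ v, E v y → ∃ u, E u x ∧ OPairMem E f u v

/-- `f` is a bijection between `x` and `y`. -/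
def IntBij (E : W → W → Prop) (f x y : W) : Prop :=
  IntInj E f x y ∧ IntSurj E f x y

/-- `κ` is a cardinal: an ordinal not in bijection with any smaller ordinal. -/
def IsCardinal (E : W → W → Prop) (κ : W) : Prop :=
  IsOrd E κ ∧ ∀ α, E α κ → ¬ ∃ f, IntBij E f α κ

/-- `s = x ∪ {x}`. -/
def IsSuccOf (E : W → W → Prop) (s x : W) : Prop :=
  ∀ z, E z s ↔ (E z x ∨ z = x)

/-- `n` is a natural number: an ordinal all of whose members (and itself) are
zero or successor ordinals. -/
def IsNatOrd (E : W → W → Prop) (n : W) : Prop :=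
  IsOrd E n ∧ ∀ m, (E m n ∨ m = n) → ((∀ z, ¬ E z m) ∨ ∃ k, IsSuccOf E m k)

/-- `o` is the ordinal `ω`. -/
def IsOmega (E : W → W → Prop) (o : W) : Prop :=
  IsOrd E o ∧ ¬ IsNatOrd E o ∧ ∀ m, E m o → IsNatOrd E m

/-- `δ` is a regular cardinal: a cardinal such that the range of any set function
from a smaller ordinal into `δ` is bounded in `δ`. -/
def IsRegular' (E : W → W → Prop) (δ : W) : Prop :=
  IsCardinal E δ ∧
  ∀ α f, E α δ → IsFuncOn E f α → MapsInto E f δ →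
    ∃ β, E β δ ∧ ∀ u v, OPairMem E f u v → (E v β ∨ v = β)

/-- `r` is a well-ordering of the set `x`. -/
def IsWellOrderOn (E : W → W → Prop) (r x : W) : Prop :=
  (∀ p, E p r → ∃ u v, E u x ∧ E v x ∧ IsOPair E u v p) ∧
  (∀ u v, E u x → E v x → (OPairMem E r u v ∨ u = v ∨ OPairMem E r v u)) ∧
  (∀ u v w, OPairMem E r u v → OPairMem E r v w → OPairMem E r u w) ∧
  (∀ u, ¬ OPairMem E r u u) ∧
  (∀ z, (∀ w, E w z → E w x) → (∃ w, E w z) → ∃ m, E m z ∧ ∀ w, E w z → w ≠ m → OPairMem E r m w)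

/-- Extensionality. -/
def Extensionality (E : W → W → Prop) : Prop :=
  ∀ x y, (∀ z, E z x ↔ E z y) → x = y

/-- The empty set axiom. -/
def EmptySetAx (E : W → W → Prop) : Prop := ∃ e, ∀ z, ¬ E z e

/-- The pairing axiom. -/
def PairingAx (E : W → W → Prop) : Prop := ∀ x y, ∃ p, IsUPair E x y p

/-- The union axiom. -/
def UnionAx (E : W → W → Prop) : Prop :=
  ∀ x, ∃ u, ∀ z, (E z u ↔ ∃ w, E w x ∧ E z w)

/-- The axiom of infinity. -/
def InfinityAx (E : W → W → Prop) : Prop :=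
  ∃ I, (∃ e, E e I ∧ ∀ z, ¬ E z e) ∧ ∀ x, E x I → ∃ s, E s I ∧ IsSuccOf E s x

/-- The foundation scheme: every nonempty definable class has an `E`-minimal element. -/
def FoundationScheme (E : W → W → Prop) : Prop :=
  ∀ (n : ℕ) (φ : setLang.BoundedFormula Empty (n + 1)) (p : Fin n → W),
    (∃ x, Sat E φ (Fin.snoc p x)) →
      ∃ x, Sat E φ (Fin.snoc p x) ∧ ∀ y, E y x → ¬ Sat E φ (Fin.snoc p y)

/-- The separation scheme. -/
def SeparationScheme (E : W → W → Prop) : Prop :=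
  ∀ (n : ℕ) (φ : setLang.BoundedFormula Empty (n + 1)) (p : Fin n → W) (a : W),
    ∃ b, ∀ z, (E z b ↔ (E z a ∧ Sat E φ (Fin.snoc p z)))

/-- The collection scheme. -/
def CollectionScheme (E : W → W → Prop) : Prop :=
  ∀ (n : ℕ) (φ : setLang.BoundedFormula Empty (n + 2)) (p : Fin n → W) (a : W),
    (∀ x, E x a → ∃ y, Sat E φ (Fin.snoc (Fin.snoc p x) y)) →
      ∃ b, ∀ x, E x a → ∃ y, E y b ∧ Sat E φ (Fin.snoc (Fin.snoc p x) y)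

/-- The well-ordering principle: every set can be well-ordered. -/
def WellOrderingPrin (E : W → W → Prop) : Prop :=
  ∀ x, ∃ r, IsWellOrderOn E r x

/-- `(W, E) ⊨ ZFC⁻`: ZFC without the power set axiom, with collection and
the well-ordering principle. -/
def ZFCminus (E : W → W → Prop) : Prop :=
  Extensionality E ∧ EmptySetAx E ∧ PairingAx E ∧ UnionAx E ∧ InfinityAx E ∧
  FoundationScheme E ∧ SeparationScheme E ∧ CollectionScheme E ∧ WellOrderingPrin E

/-- The power set axiom. -/
def PowerSetAx (E : W → W → Prop) : Prop :=
  ∀ x, ∃ p, ∀ z, (E z p ↔ ∀ w, E w z → E w x)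

/-- `(W, E) ⊨ ZFC`. -/
def ZFC' (E : W → W → Prop) : Prop := ZFCminus E ∧ PowerSetAx E

/-- `g = f ↾ ξ`. -/
def IsRestrictionOf (E : W → W → Prop) (f ξ g : W) : Prop :=
  ∀ p, (E p g ↔ (E p f ∧ ∃ u v, E u ξ ∧ IsOPair E u v p))

/-- The `DC_δ`-scheme: for every definable relation `φ(x, y, p̄)` without terminal
nodes there is a function `f` with domain `δ` such that `φ(f ↾ ξ, f(ξ), p̄)` holds
for every `ξ < δ`. -/
def DCScheme (E : W → W → Prop) (δ : W) : Prop :=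
  ∀ (n : ℕ) (φ : setLang.BoundedFormula Empty (n + 2)) (p : Fin n → W),
    (∀ x, ∃ y, Sat E φ (Fin.snoc (Fin.snoc p x) y)) →
      ∃ f, IsFuncOn E f δ ∧
        ∀ ξ, E ξ δ → ∃ g v, IsRestrictionOf E f ξ g ∧ FunApp E f ξ v ∧
          Sat E φ (Fin.snoc (Fin.snoc p g) v)

/-- The class defined by the formula `φ` with parameters `p`. -/
def ClassOf (E : W → W → Prop) {n : ℕ} (φ : setLang.BoundedFormula Empty (n + 1))
    (p : Fin n → W) : Set W :=
  {x | Sat E φ (Fin.snoc p x)}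

/-- A collection of elements of `W` is a proper class if it is not the extension of a set. -/
def IsProperClass (E : W → W → Prop) (C : Set W) : Prop :=
  ¬ ∃ s, ∀ x, (E x s ↔ x ∈ C)

/-- `C` is `δ`-big: there is a definable (with parameters) class surjection of `C` onto `δ`. -/
def IsDeltaBig (E : W → W → Prop) (C : Set W) (δ : W) : Prop :=
  ∃ (n : ℕ) (ψ : setLang.BoundedFormula Empty (n + 2)) (q : Fin n → W),
    (∀ x ∈ C, ∃ y, E y δ ∧ Sat E ψ (Fin.snoc (Fin.snoc q x) y) ∧
      ∀ y', Sat E ψ (Fin.snoc (Fin.snoc q x) y') → y' = y) ∧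
    (∀ ξ, E ξ δ → ∃ x ∈ C, Sat E ψ (Fin.snoc (Fin.snoc q x) ξ))

/-- The membership relation on the members of `M`. -/
def SubRel (E : W → W → Prop) (M : W) : {x // E x M} → {x // E x M} → Prop :=
  fun u v => E u.1 v.1

/-- The membership relation on a subclass `C` of `W`. -/
def SubRelOn (E : W → W → Prop) (C : Set W) : {x // x ∈ C} → {x // x ∈ C} → Prop :=
  fun u v => E u.1 v.1

/-- `ρ` is a rank function on the transitive set `d`: `ρ(u)` is the strict supremum of
`ρ(y) + 1` for `y ∈ u`. -/
def IsRankFunOn (E : W → W → Prop) (ρ d : W) : Prop :=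
  IsFuncOn E ρ d ∧
  ∀ u v, E u d → FunApp E ρ u v →
    (IsOrd E v ∧ (∀ y, E y u → ∃ w, FunApp E ρ y w ∧ E w v) ∧
      ∀ β, E β v → ∃ y w, E y u ∧ FunApp E ρ y w ∧ (E β w ∨ β = w))

/-- `x` has (internal) rank below `κ`. -/
def HasRankBelow (E : W → W → Prop) (x κ : W) : Prop :=
  ∃ d ρ, IsTransSet E d ∧ E x d ∧ IsRankFunOn E ρ d ∧ ∃ v, FunApp E ρ x v ∧ E v κ

/-- `x ⊆ y` (internally). -/
def SubsetE (E : W → W → Prop) (x y : W) : Prop := ∀ z, E z x → E z y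

/-- `p = P(x)` (internally). -/
def IsPowerSetOf (E : W → W → Prop) (p x : W) : Prop :=
  ∀ z, (E z p ↔ SubsetE E z x)

/-- `s = κ⁺`, the least cardinal above `κ`. -/
def IsCardSuccOf (E : W → W → Prop) (κ s : W) : Prop :=
  IsCardinal E s ∧ E κ s ∧ ∀ c, IsCardinal E c → E κ c → ¬ E c s

/-- The continuum hypothesis: `ω₁` is in bijection with `P(ω)`. -/
def CHstat (E : W → W → Prop) : Prop :=
  ∀ o p o1, IsOmega E o → IsPowerSetOf E p o → IsCardSuccOf E o o1 →
    ∃ f, IntBij E f o1 p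

/-- `δ` is an inaccessible cardinal: uncountable, regular and strong limit. -/
def IsInaccessible' (E : W → W → Prop) (δ : W) : Prop :=
  IsRegular' E δ ∧ (∃ o, IsOmega E o ∧ E o δ) ∧
  ∀ α p, E α δ → IsPowerSetOf E p α → ∃ γ, E γ δ ∧ ∃ f, IntBij E f p γ

/-- `c` is the relative complement `κ \ x`. -/
def IsRelCompl (E : W → W → Prop) (κ x c : W) : Prop :=
  ∀ z, (E z c ↔ (E z κ ∧ ¬ E z x))

/-- `κ` is a measurable cardinal: there is a `κ`-complete nonprincipal ultrafilter on `κ`. -/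
def IsMeasurable' (E : W → W → Prop) (κ : W) : Prop :=
  IsCardinal E κ ∧ (∃ o, IsOmega E o ∧ E o κ) ∧
  ∃ u, (∀ x, E x u → SubsetE E x κ) ∧ E κ u ∧ (¬ ∃ e, E e u ∧ ∀ z, ¬ E z e) ∧
    (∀ x y, E x u → SubsetE E x y → SubsetE E y κ → E y u) ∧
    (∀ x, SubsetE E x κ → (E x u ∨ ∃ c, IsRelCompl E κ x c ∧ E c u)) ∧
    (¬ ∃ x, E x u ∧ ∃ a, ∀ z, (E z x ↔ z = a)) ∧
    (∀ γ f, E γ κ → IsFuncOn E f γ → (∀ ξ v, FunApp E f ξ v → E v u) →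
      ∃ i, (∀ z, (E z i ↔ (E z κ ∧ ∀ ξ v, E ξ γ → FunApp E f ξ v → E z v))) ∧ E i u)

/-- `c` is the cofinality of `α`: the least ordinal admitting a map onto an
unbounded subset of `α`. -/
def HasCofinalMap (E : W → W → Prop) (α c : W) : Prop :=
  ∃ f, IsFuncOn E f c ∧ MapsInto E f α ∧
    ∀ β, E β α → ∃ u v, OPairMem E f u v ∧ (E β v ∨ β = v)

def IsCofinalityOf (E : W → W → Prop) (α c : W) : Prop :=
  IsOrd E c ∧ HasCofinalMap E α c ∧ ∀ c', E c' c → ¬ HasCofinalMap E α c'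

end Defs

section ZFSetDefs

/-- The elements of a `ZFSet`. -/
abbrev Elem (A : ZFSet) : Type 1 := {x : ZFSet // x ∈ A}

/-- The membership relation on the elements of a `ZFSet`. -/
def memOf (A : ZFSet) : Elem A → Elem A → Prop := fun a b => a.1 ∈ b.1

/-- `A` is a countable transitive set. -/
def CTS (A : ZFSet) : Prop := A.IsTransitive ∧ A.toSet.Countable

/-- `x` is a von Neumann ordinal. -/
def OrdZF (x : ZFSet) : Prop := x.IsTransitive ∧ ∀ y, y ∈ x → ZFSet.IsTransitive y

/-- `M` and `V` have the same ordinals. -/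
def SameOrdinals (M V : ZFSet) : Prop := ∀ x, OrdZF x → (x ∈ M ↔ x ∈ V)

/-- `M` and `V` have the same cardinals: an ordinal is a cardinal in `(M, ∈)` iff
it is one in `(V, ∈)`. -/
def SameCardinals (M V : ZFSet) : Prop :=
  ∀ (x : ZFSet) (hM : x ∈ M) (hV : x ∈ V),
    IsCardinal (memOf M) ⟨x, hM⟩ ↔ IsCardinal (memOf V) ⟨x, hV⟩

/-- `M` and `V` compute the same cofinalities. -/
def SameCofinalities (M V : ZFSet) : Prop :=
  ∀ (α c : ZFSet) (hαM : α ∈ M) (hcM : c ∈ M) (hαV : α ∈ V) (hcV : c ∈ V),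
    IsCofinalityOf (memOf M) ⟨α, hαM⟩ ⟨c, hcM⟩ ↔ IsCofinalityOf (memOf V) ⟨α, hαV⟩ ⟨c, hcV⟩

/-- `M` has unboundedly many cardinals. -/
def UnboundedCardinals (M : ZFSet) : Prop :=
  ∀ x : Elem M, ∃ c : Elem M, IsCardinal (memOf M) c ∧ memOf M x c

end ZFSetDefs
/-- The language with two binary relation symbols: `∈` and a symbol for an embedding `j`. -/
def setLang2 : FirstOrder.Language :=
  ⟨fun _ => Empty, fun n => match n with | 2 => Bool | _ => Empty⟩

/-- The `setLang2`-structure on `W` induced by binary relations `E` and `J`. -/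
def memStruc2 (W : Type*) (E J : W → W → Prop) : setLang2.Structure W where
  funMap := fun f _ => f.elim
  RelMap := fun {n} r xs =>
    match n, r, xs with
    | 2, true, xs => E (xs 0) (xs 1)
    | 2, false, xs => J (xs 0) (xs 1)

/-- Satisfaction of a formula in the language with `∈` and a predicate for `j`. -/
def Sat2 {W : Type*} (E J : W → W → Prop) {n : ℕ} (φ : setLang2.BoundedFormula Empty n)
    (xs : Fin n → W) : Prop :=
  @FirstOrder.Language.BoundedFormula.Realize setLang2 W (memStruc2 W E J) Empty n φ Empty.elim xs

section Defs2

variable {W : Type*}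

/-- The separation scheme for formulas in the language expanded by a symbol for `j`. -/
def SeparationScheme2 (E J : W → W → Prop) : Prop :=
  ∀ (n : ℕ) (φ : setLang2.BoundedFormula Empty (n + 1)) (p : Fin n → W) (a : W),
    ∃ b, ∀ z, (E z b ↔ (E z a ∧ Sat2 E J φ (Fin.snoc p z)))

/-- The collection scheme for formulas in the language expanded by a symbol for `j`. -/
def CollectionScheme2 (E J : W → W → Prop) : Prop :=
  ∀ (n : ℕ) (φ : setLang2.BoundedFormula Empty (n + 2)) (p : Fin n → W) (a : W),
    (∀ x, E x a → ∃ y, Sat2 E J φ (Fin.snoc (Fin.snoc p x) y)) →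
      ∃ b, ∀ x, E x a → ∃ y, E y b ∧ Sat2 E J φ (Fin.snoc (Fin.snoc p x) y)

/-- The set `γ^{<δ}` of all functions from ordinals below `δ` into `γ` exists. -/
def LtPowExists (E : W → W → Prop) (γ δ : W) : Prop :=
  ∃ s, ∀ f, (E f s ↔ ∃ α, E α δ ∧ IsFuncOn E f α ∧ MapsInto E f γ)

/-- The set `M` is closed under `<δ`-sequences (from the ambient model). -/
def ClosedUnderLtSeq (E : W → W → Prop) (δ M : W) : Prop :=
  ∀ f α, E α δ → IsFuncOn E f α → MapsInto E f M → E f M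

end Defs2

/-- `L₀ ⊨ ZFC + V = L`: `L₀` is a transitive ZFC-model that is contained in every
transitive ZFC-model with the same ordinals (the standard characterization of
transitive models of `V = L`). -/
def SatisfiesVeqL (L0 : ZFSet) : Prop :=
  ZFC' (memOf L0) ∧
  ∀ Z : ZFSet, Z.IsTransitive → ZFC' (memOf Z) → SameOrdinals Z L0 → L0 ⊆ Z

/-- The membership relation on the internal `V_{λ+1}` given by `v`. -/
def VRel (V : ZFSet) (v : Elem V) :
    {x : Elem V // memOf V x v} → {x : Elem V // memOf V x v} → Prop :=
  fun a b => memOf V a.1 b.1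

/-!
Using `DC_δ`, choose `d_ξ` for `ξ < δ` greedily: as long as the earlier values are not
predense in `P`, `d_ξ` is an element of `D` incompatible with all of them. If the values
below some stage are predense, those below the least such stage form a set-sized maximal
antichain inside `D`. Otherwise `ξ ↦ d_ξ` injects `δ` into a set antichain, which the chain
condition injects into some `γ < δ`; Schröder–Bernstein, carried out inside `W` with the
closure of `δ ∖ γ` under the injection, then gives a bijection of `γ` onto `δ`, so `δ` is not
a cardinal. Since `W` satisfies its schemes only for definable classes, every class and
relation the argument uses has to be shown definable.
-/

-- lets `simp` evaluate `Fin.snoc xs y i` at numerals `i`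
attribute [local simp] Fin.snoc Fin.castLT

section Definability

variable {W : Type*} (E : W → W → Prop)

lemma exists_sat_iff_sat_comp {m m' : ℕ} (σ : Fin m → Fin m')
    (φ : setLang.BoundedFormula Empty m) :
    ∃ ψ : setLang.BoundedFormula Empty m',
      ∀ v : Fin m' → W, Sat E ψ v ↔ Sat E φ (v ∘ σ) := by
  let _ : setLang.Structure W := memStruc W E
  refine ⟨BoundedFormula.relabel (β := Empty) (n := m') id
      (φ.toFormula.relabel (Sum.map id σ) : setLang.BoundedFormula (Empty ⊕ Fin m') 0), ?_⟩
  intro v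
  change BoundedFormula.Realize _ _ _ ↔ BoundedFormula.Realize _ _ _
  rw [BoundedFormula.realize_relabel,
    show (v ∘ Fin.natAdd m' : Fin 0 → W) = default from Subsingleton.elim _ _]
  change Formula.Realize _ _ ↔ _
  rw [Formula.realize_relabel, BoundedFormula.realize_toFormula]
  exact Iff.of_eq (by congr 1)

/-- `R` is definable in `(W, E)` with parameters: the `i`-th free variable of `φ` stands for
the argument or the parameter named by `ρ i`. -/
def DefinableRel (k : ℕ) (R : (Fin k → W) → Prop) : Prop :=
  ∃ (n : ℕ) (φ : setLang.BoundedFormula Empty n) (ρ : Fin n → Fin k ⊕ W),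
    ∀ xs : Fin k → W, R xs ↔ Sat E φ (fun i => Sum.elim xs id (ρ i))

def DefinablePred (Q : W → Prop) : Prop := DefinableRel E 1 (fun xs => Q (xs 0))

def DefinablePred₂ (R : W → W → Prop) : Prop := DefinableRel E 2 (fun xs => R (xs 0) (xs 1))

namespace DefinableRel

variable {E} {k : ℕ} {R R₁ R₂ : (Fin k → W) → Prop}

lemma congr (h : DefinableRel E k R) {R' : (Fin k → W) → Prop} (h' : ∀ xs, R' xs ↔ R xs) :
    DefinableRel E k R' := by
  obtain ⟨n, φ, ρ, H⟩ := h
  exact ⟨n, φ, ρ, fun xs => (h' xs).trans (H xs)⟩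

lemma mem (i j : Fin k) : DefinableRel E k (fun xs => E (xs i) (xs j)) := by
  let _ : setLang.Structure W := memStruc W E
  refine ⟨2, Relations.boundedFormula₂ () (Term.var (Sum.inr 0)) (Term.var (Sum.inr 1)),
    ![Sum.inl i, Sum.inl j], fun xs => ?_⟩
  change _ ↔ BoundedFormula.Realize _ _ _
  erw [BoundedFormula.realize_rel₂]
  simp [Term.realize]
  exact Iff.rfl

lemma eq (i j : Fin k) : DefinableRel E k (fun xs => xs i = xs j) := by
  let _ : setLang.Structure W := memStruc W E
  refine ⟨2, Term.bdEqual (Term.var (Sum.inr 0)) (Term.var (Sum.inr 1)),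
    ![Sum.inl i, Sum.inl j], fun xs => ?_⟩
  change _ ↔ BoundedFormula.Realize _ _ _
  rw [BoundedFormula.realize_bdEqual]
  simp [Term.realize]

lemma not (h : DefinableRel E k R) : DefinableRel E k (fun xs => ¬ R xs) := by
  let _ : setLang.Structure W := memStruc W E
  obtain ⟨n, φ, ρ, H⟩ := h
  refine ⟨n, φ.not, ρ, fun xs => ?_⟩
  change _ ↔ BoundedFormula.Realize _ _ _
  rw [BoundedFormula.realize_not]
  exact not_congr (H xs)

lemma imp (h₁ : DefinableRel E k R₁) (h₂ : DefinableRel E k R₂) :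
    DefinableRel E k (fun xs => R₁ xs → R₂ xs) := by
  let _ : setLang.Structure W := memStruc W E
  obtain ⟨n₁, φ₁, ρ₁, H₁⟩ := h₁
  obtain ⟨n₂, φ₂, ρ₂, H₂⟩ := h₂
  obtain ⟨ψ₁, Hψ₁⟩ := exists_sat_iff_sat_comp E (Fin.castAdd n₂) φ₁
  obtain ⟨ψ₂, Hψ₂⟩ := exists_sat_iff_sat_comp E (Fin.natAdd n₁) φ₂
  refine ⟨n₁ + n₂, ψ₁.imp ψ₂, Fin.addCases ρ₁ ρ₂, fun xs => ?_⟩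
  change _ ↔ BoundedFormula.Realize _ _ _
  rw [BoundedFormula.realize_imp]
  let v : Fin (n₁ + n₂) → W := fun i => Sum.elim xs id (Fin.addCases ρ₁ ρ₂ i)
  refine imp_congr ((H₁ xs).trans ((Iff.of_eq ?_).trans (Hψ₁ v).symm))
    ((H₂ xs).trans ((Iff.of_eq ?_).trans (Hψ₂ v).symm)) <;>
  · congr 1
    funext t
    simp [v]

lemma and (h₁ : DefinableRel E k R₁) (h₂ : DefinableRel E k R₂) :
    DefinableRel E k (fun xs => R₁ xs ∧ R₂ xs) :=
  (h₁.imp h₂.not).not.congr fun _ => by tauto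

lemma or (h₁ : DefinableRel E k R₁) (h₂ : DefinableRel E k R₂) :
    DefinableRel E k (fun xs => R₁ xs ∨ R₂ xs) :=
  (h₁.not.imp h₂).congr fun _ => by tauto

lemma iff (h₁ : DefinableRel E k R₁) (h₂ : DefinableRel E k R₂) :
    DefinableRel E k (fun xs => R₁ xs ↔ R₂ xs) :=
  ((h₁.imp h₂).and (h₂.imp h₁)).congr fun _ => by tauto

lemma comp {k' : ℕ} (σ : Fin k → Fin k') (h : DefinableRel E k R) :
    DefinableRel E k' (fun xs => R (xs ∘ σ)) := by
  obtain ⟨n, φ, ρ, H⟩ := h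
  refine ⟨n, φ, fun t => Sum.map σ id (ρ t), fun xs => (H _).trans (Iff.of_eq ?_)⟩
  congr 1
  funext t
  rcases hρ : ρ t with j | w <;> simp [hρ]

def snocParam {n : ℕ} (a : W) (ρ : Fin n → Fin (k + 1) ⊕ W) : Fin n → Fin k ⊕ W :=
  fun t => match ρ t with
  | Sum.inl j => if h : (j : ℕ) < k then Sum.inl ⟨j, h⟩ else Sum.inr a
  | Sum.inr w => Sum.inr w

lemma elim_snocParam {n : ℕ} (a : W) (ρ : Fin n → Fin (k + 1) ⊕ W) (xs : Fin k → W)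
    (t : Fin n) :
    Sum.elim xs id (snocParam a ρ t) = Sum.elim (Fin.snoc xs a) id (ρ t) := by
  unfold snocParam
  rcases ρ t with j | w
  · by_cases hj : (j : ℕ) < k <;> simp [hj]
  · rfl

lemma snoc_const (a : W) {R : (Fin (k + 1) → W) → Prop} (h : DefinableRel E (k + 1) R) :
    DefinableRel E k (fun xs => R (Fin.snoc xs a)) := by
  obtain ⟨n, φ, ρ, H⟩ := h
  exact ⟨n, φ, snocParam a ρ, fun xs => (H _).trans (by simp only [elim_snocParam])⟩

lemma all [Nonempty W] {R : (Fin (k + 1) → W) → Prop} (h : DefinableRel E (k + 1) R) :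
    DefinableRel E k (fun xs => ∀ y, R (Fin.snoc xs y)) := by
  let _ : setLang.Structure W := memStruc W E
  obtain ⟨n, φ, ρ, H⟩ := h
  -- the slots of `φ` that read the last argument are redirected to the new bound variable
  let σ : Fin n → Fin (n + 1) := fun t =>
    match ρ t with
    | Sum.inl j => if (j : ℕ) < k then Fin.castSucc t else Fin.last n
    | Sum.inr _ => Fin.castSucc t
  obtain ⟨ψ, Hψ⟩ := exists_sat_iff_sat_comp E σ φ
  refine ⟨n, ψ.all, snocParam (Classical.arbitrary W) ρ, fun xs => ?_⟩
  change _ ↔ BoundedFormula.Realize _ _ _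
  rw [BoundedFormula.realize_all]
  refine forall_congr' fun a => (H _).trans ((Iff.of_eq ?_).trans (Hψ _).symm)
  congr 1
  funext t
  simp only [Function.comp_apply, σ]
  rcases hρ : ρ t with j | w
  · by_cases hj : (j : ℕ) < k <;> simp [hj, elim_snocParam, hρ]
  · simp [elim_snocParam, hρ]

lemma ex [Nonempty W] {R : (Fin (k + 1) → W) → Prop} (h : DefinableRel E (k + 1) R) :
    DefinableRel E k (fun xs => ∃ y, R (Fin.snoc xs y)) :=
  h.not.all.not.congr fun _ => by simp only [not_forall, not_not]

end DefinableRel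

end Definability

lemma Fin.append_pair {α : Type*} {n : ℕ} (p : Fin n → α) (x y : α) :
    Fin.append p ![x, y] = Fin.snoc (Fin.snoc p x) y := by
  ext ⟨i, hi⟩
  simp only [Fin.append, Fin.addCases, Fin.snoc]
  by_cases h : i < n
  · simp [h, show i < n + 1 by omega]
  · obtain rfl | rfl : i = n ∨ i = n + 1 := by omega
    all_goals simp

namespace DefinableRel

variable {W : Type*} {E : W → W → Prop} {k : ℕ} {R : (Fin k → W) → Prop}

lemma sat_append {n : ℕ} (φ : setLang.BoundedFormula Empty (n + k)) (p : Fin n → W) :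
    DefinableRel E k (fun xs => Sat E φ (Fin.append p xs)) := by
  refine ⟨n + k, φ, Fin.append (Sum.inr ∘ p) Sum.inl, fun xs => Iff.of_eq ?_⟩
  change Sat E φ _ = Sat E φ _
  congr 1
  funext t
  refine Fin.addCases (fun i => ?_) (fun i => ?_) t <;> simp

lemma exists_sat_append [Nonempty W] (h : DefinableRel E k R) :
    ∃ (n : ℕ) (ψ : setLang.BoundedFormula Empty (n + k)) (p : Fin n → W),
      ∀ xs, R xs ↔ Sat E ψ (Fin.append p xs) := by
  obtain ⟨n, φ, ρ, H⟩ := h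
  let σ : Fin n → Fin (n + k) := fun t =>
    Sum.elim (Fin.natAdd n) (fun _ => Fin.castAdd k t) (ρ t)
  obtain ⟨ψ, Hψ⟩ := exists_sat_iff_sat_comp E σ φ
  refine ⟨n, ψ, fun t => Sum.elim (fun _ => Classical.arbitrary W) id (ρ t),
    fun xs => (H xs).trans ((Iff.of_eq ?_).trans (Hψ _).symm)⟩
  congr 1
  funext t
  rcases hρ : ρ t with j | w <;> simp [σ, hρ]

end DefinableRel

section DefinablePred

variable {W : Type*} {E : W → W → Prop}

lemma DefinablePred.app {Q : W → Prop} (h : DefinablePred E Q) {k : ℕ} (i : Fin k) :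
    DefinableRel E k (fun xs => Q (xs i)) :=
  h.comp (fun _ => i)

lemma DefinablePred₂.app {R : W → W → Prop} (h : DefinablePred₂ E R) {k : ℕ}
    (i j : Fin k) : DefinableRel E k (fun xs => R (xs i) (xs j)) :=
  (h.comp ![i, j]).congr fun _ => Iff.rfl

lemma definablePred_classOf {n : ℕ} (φ : setLang.BoundedFormula Empty (n + 1))
    (p : Fin n → W) : DefinablePred E (· ∈ ClassOf E φ p) :=
  (DefinableRel.sat_append φ p).congr fun xs => by simp [ClassOf, Fin.append_right_eq_snoc]

lemma definablePred₂_sat {n : ℕ} (φ : setLang.BoundedFormula Empty (n + 2)) (p : Fin n → W) :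
    DefinablePred₂ E (fun x y => Sat E φ (Fin.snoc (Fin.snoc p x) y)) :=
  (DefinableRel.sat_append φ p).congr fun xs => by
    rw [show xs = ![xs 0, xs 1] from by ext i; fin_cases i <;> rfl, Fin.append_pair]
    rfl

variable [Nonempty W]

lemma DefinablePred.exists_sat {Q : W → Prop} (h : DefinablePred E Q) :
    ∃ (n : ℕ) (ψ : setLang.BoundedFormula Empty (n + 1)) (p : Fin n → W),
      ∀ x, Q x ↔ Sat E ψ (Fin.snoc p x) := by
  obtain ⟨n, ψ, p, H⟩ := DefinableRel.exists_sat_append h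
  exact ⟨n, ψ, p, fun x => (H ![x]).trans (by simp [Fin.append_right_eq_snoc])⟩

lemma DefinablePred₂.exists_sat {R : W → W → Prop} (h : DefinablePred₂ E R) :
    ∃ (n : ℕ) (ψ : setLang.BoundedFormula Empty (n + 2)) (p : Fin n → W),
      ∀ x y, R x y ↔ Sat E ψ (Fin.snoc (Fin.snoc p x) y) := by
  obtain ⟨n, ψ, p, H⟩ := DefinableRel.exists_sat_append h
  exact ⟨n, ψ, p, fun x y => (H ![x, y]).trans (by rw [Fin.append_pair])⟩

end DefinablePred

namespace DefinableRel

variable {W : Type*} {E : W → W → Prop} {k : ℕ}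

lemma mem_const (i : Fin k) (c : W) : DefinableRel E k (fun xs => E (xs i) c) :=
  ((mem (E := E) i.castSucc (Fin.last k)).snoc_const c).congr fun _ => by simp

variable [Nonempty W]

lemma isUPair (i j l : Fin k) : DefinableRel E k (fun xs => IsUPair E (xs i) (xs j) (xs l)) :=
  ((mem (Fin.last k) l.castSucc).iff
    ((eq (Fin.last k) i.castSucc).or (eq (Fin.last k) j.castSucc))).all.congr
    fun _ => by simp [IsUPair]

lemma isOPair (i j l : Fin k) : DefinableRel E k (fun xs => IsOPair E (xs i) (xs j) (xs l)) :=
  ((isUPair i.castSucc.castSucc i.castSucc.castSucc (Fin.last k).castSucc).and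
    ((isUPair i.castSucc.castSucc j.castSucc.castSucc (Fin.last (k + 1))).and
      (isUPair (Fin.last k).castSucc (Fin.last (k + 1)) l.castSucc.castSucc))).ex.ex.congr
    fun _ => by simp [IsOPair]

lemma oPairMem (r i j : Fin k) : DefinableRel E k (fun xs => OPairMem E (xs r) (xs i) (xs j)) :=
  ((mem (Fin.last k) r.castSucc).and (isOPair i.castSucc j.castSucc (Fin.last k))).ex.congr
    fun _ => by simp [OPairMem]

lemma oPairMem_const (F : W) (i j : Fin k) :
    DefinableRel E k (fun xs => OPairMem E F (xs i) (xs j)) :=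
  ((oPairMem (E := E) (Fin.last k) i.castSucc j.castSucc).snoc_const F).congr fun _ => by simp

end DefinableRel

section Schemes

variable {W : Type*} {E : W → W → Prop} [Nonempty W]

lemma SeparationScheme.exists_sep (hsep : SeparationScheme E) {Q : W → Prop}
    (hQ : DefinablePred E Q) (a : W) : ∃ b, ∀ z, E z b ↔ E z a ∧ Q z := by
  obtain ⟨n, ψ, p, H⟩ := hQ.exists_sat
  obtain ⟨b, hb⟩ := hsep n ψ p a
  exact ⟨b, fun z => (hb z).trans (by rw [H z])⟩

lemma FoundationScheme.exists_minimal (hfound : FoundationScheme E) {Q : W → Prop}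
    (hQ : DefinablePred E Q) (hne : ∃ x, Q x) : ∃ x, Q x ∧ ∀ y, E y x → ¬ Q y := by
  obtain ⟨n, ψ, p, H⟩ := hQ.exists_sat
  simp only [H] at hne ⊢
  exact hfound n ψ p hne

lemma CollectionScheme.exists_collecting (hcoll : CollectionScheme E) {R : W → W → Prop}
    (hR : DefinablePred₂ E R) (a : W) (tot : ∀ x, E x a → ∃ y, R x y) :
    ∃ b, ∀ x, E x a → ∃ y, E y b ∧ R x y := by
  obtain ⟨n, ψ, p, H⟩ := hR.exists_sat
  simp only [H] at tot ⊢
  exact hcoll n ψ p a tot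

lemma DCScheme.exists_seq {δ : W} (hdc : DCScheme E δ) {R : W → W → Prop}
    (hR : DefinablePred₂ E R) (tot : ∀ x, ∃ y, R x y) :
    ∃ f, IsFuncOn E f δ ∧
      ∀ ξ, E ξ δ → ∃ g v, IsRestrictionOf E f ξ g ∧ FunApp E f ξ v ∧ R g v := by
  obtain ⟨n, ψ, p, H⟩ := hR.exists_sat
  simp only [H] at tot ⊢
  exact hdc n ψ p tot

end Schemes

section Functions

variable {W : Type*} {E : W → W → Prop}

lemma exists_isOPair (hpair : PairingAx E) (a b : W) : ∃ p, IsOPair E a b p := by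
  obtain ⟨s, hs⟩ := hpair a a
  obtain ⟨t, ht⟩ := hpair a b
  obtain ⟨p, hp⟩ := hpair s t
  exact ⟨p, s, t, hs, ht, hp⟩

lemma IsOPair.inj {a b p a' b' : W} (h : IsOPair E a b p) (h' : IsOPair E a' b' p) :
    a = a' ∧ b = b' := by
  obtain ⟨s, t, hs, ht, hst⟩ := h
  obtain ⟨s', t', hs', ht', hst'⟩ := h'
  have hs1 : ∀ z, E z s → z = a := fun z hz => ((hs z).1 hz).elim id id
  have hs1' : ∀ z, E z s' → z = a' := fun z hz => ((hs' z).1 hz).elim id id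
  have has : E a s := (hs a).2 (Or.inl rfl)
  have hbt : E b t := (ht b).2 (Or.inr rfl)
  have ha't' : E a' t' := (ht' a').2 (Or.inl rfl)
  have hb't' : E b' t' := (ht' b').2 (Or.inr rfl)
  obtain rfl : a = a' := by
    rcases (hst' s).1 ((hst s).2 (Or.inl rfl)) with rfl | rfl
    · exact hs1' a has
    · exact (hs1 a' ha't').symm
  refine ⟨rfl, ?_⟩
  rcases (hst' t).1 ((hst t).2 (Or.inr rfl)) with rfl | rfl
  · have hba : b = a := hs1' b hbt
    rcases (hst t').1 ((hst' t').2 (Or.inr rfl)) with rfl | rfl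
    · exact hba.trans (hs1 b' hb't').symm
    · rcases (ht b').1 hb't' with h | h
      · exact hba.trans h.symm
      · exact h.symm
  · rcases (ht' b).1 hbt with rfl | h
    · rcases (ht b').1 hb't' with h | h
      · exact h.symm
      · exact h.symm
    · exact h

lemma IsRestrictionOf.oPairMem_iff {f ξ g u v : W} (hg : IsRestrictionOf E f ξ g) :
    OPairMem E g u v ↔ E u ξ ∧ OPairMem E f u v := by
  constructor
  · rintro ⟨q, hqg, hq⟩
    obtain ⟨hqf, u', v', hu', hq'⟩ := (hg q).1 hqg
    obtain ⟨rfl, rfl⟩ := hq'.inj hq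
    exact ⟨hu', q, hqf, hq⟩
  · rintro ⟨hu, q, hqf, hq⟩
    exact ⟨q, (hg q).2 ⟨hqf, u, v, hu, hq⟩, hq⟩

variable [Nonempty W]

lemma exists_isFuncOn (hpair : PairingAx E) (hsep : SeparationScheme E)
    (hcoll : CollectionScheme E) {R : W → W → Prop} (hR : DefinablePred₂ E R) (d : W)
    (tot : ∀ x, E x d → ∃ y, R x y)
    (fnal : ∀ x y y', E x d → R x y → R x y' → y = y') :
    ∃ F, IsFuncOn E F d ∧ ∀ u v, OPairMem E F u v ↔ E u d ∧ R u v := by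
  let G : W → W → Prop := fun x q => ∃ v, R x v ∧ IsOPair E x v q
  have hG : DefinablePred₂ E G :=
    ((hR.app 0 2).and (DefinableRel.isOPair 0 2 1)).ex.congr fun _ => by simp [G]
  obtain ⟨b, hb⟩ := hcoll.exists_collecting hG d fun x hx => by
    obtain ⟨y, hy⟩ := tot x hx
    obtain ⟨q, hq⟩ := exists_isOPair hpair x y
    exact ⟨q, y, hy, hq⟩
  have hGd : DefinablePred E (fun q => ∃ x, E x d ∧ G x q) :=
    ((DefinableRel.mem_const 1 d).and (hG.app 1 0)).ex.congr fun _ => by simp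
  obtain ⟨F, hF⟩ := hsep.exists_sep hGd b
  have graph : ∀ u v, OPairMem E F u v ↔ E u d ∧ R u v := by
    refine fun u v => ⟨fun ⟨q, hqF, hq⟩ => ?_, fun ⟨hud, huv⟩ => ?_⟩
    · obtain ⟨-, x, hxd, v', hv', hq'⟩ := (hF q).1 hqF
      obtain ⟨rfl, rfl⟩ := hq'.inj hq
      exact ⟨hxd, hv'⟩
    · obtain ⟨q, hqb, v', hv', hq⟩ := hb u hud
      obtain rfl := fnal u v' v hud hv' huv
      exact ⟨q, (hF q).2 ⟨hqb, u, hud, v', hv', hq⟩, hq⟩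
  refine ⟨F, ⟨fun q hqF => ?_, fun u hud => ?_, fun u v v' h h' => ?_⟩, graph⟩
  · obtain ⟨-, x, hxd, v, -, hq⟩ := (hF q).1 hqF
    exact ⟨x, v, hxd, hq⟩
  · obtain ⟨y, hy⟩ := tot u hud
    exact ⟨y, (graph u y).2 ⟨hud, hy⟩⟩
  · obtain ⟨hud, huv⟩ := (graph u v).1 h
    exact fnal u v v' hud huv ((graph u v').1 h').2

lemma exists_image (hunion : UnionAx E) (hsep : SeparationScheme E) (f d : W) :
    ∃ A, ∀ v, E v A ↔ ∃ u, E u d ∧ OPairMem E f u v := by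
  obtain ⟨U₁, hU₁⟩ := hunion f
  obtain ⟨U₂, hU₂⟩ := hunion U₁
  have himage : DefinablePred E (fun v => ∃ u, E u d ∧ OPairMem E f u v) :=
    ((DefinableRel.mem_const 1 d).and (DefinableRel.oPairMem_const f 1 0)).ex.congr
      fun _ => by simp
  obtain ⟨A, hA⟩ := hsep.exists_sep himage U₂
  refine ⟨A, fun v => (hA v).trans ⟨And.right, fun hv => ⟨?_, hv⟩⟩⟩
  -- `v ∈ t ∈ ⟨u, v⟩ ∈ f`, so `v ∈ ⋃⋃ f`
  obtain ⟨u, -, q, hqf, s, t, -, ht, hst⟩ := hv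
  exact (hU₂ v).2 ⟨t, (hU₁ t).2 ⟨q, hqf, (hst t).2 (Or.inr rfl)⟩, (ht v).2 (Or.inr rfl)⟩

end Functions

section SchroederBernstein

variable {W : Type*} {E : W → W → Prop} [Nonempty W]

/-- The least subset `C` of `d` containing the seeds `S` and closed under `J`. -/
lemma exists_closure (hsep : SeparationScheme E) {S : W → Prop} (hS : DefinablePred E S)
    {J : W → W → Prop} (hJ : DefinablePred₂ E J) (d : W) :
    ∃ C, (∀ x, E x C → E x d) ∧ (∀ x, E x d → S x → E x C) ∧
      (∀ x y, E x C → E y d → J x y → E y C) ∧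
      (∀ x, E x C → S x ∨ ∃ u, E u C ∧ J u x) := by
  let Closed : W → Prop := fun s =>
    (∀ z, E z d → S z → E z s) ∧ (∀ u v, E u s → E v d → J u v → E v s)
  have hClosed : DefinablePred E Closed :=
    (((DefinableRel.mem_const 1 d).imp ((hS.app 1).imp (DefinableRel.mem 1 0))).all.and
      ((DefinableRel.mem 1 0).imp ((DefinableRel.mem_const 2 d).imp
        ((hJ.app 1 2).imp (DefinableRel.mem 2 0)))).all.all).congr fun _ => by simp [Closed]
  have hLeast : DefinablePred E (fun x => ∀ s, Closed s → E x s) :=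
    ((hClosed.app 1).imp (DefinableRel.mem 0 1)).all.congr fun _ => by simp
  obtain ⟨C, hC⟩ := hsep.exists_sep hLeast d
  have seed : ∀ x, E x d → S x → E x C := fun x hx hSx =>
    (hC x).2 ⟨hx, fun s hs => hs.1 x hx hSx⟩
  have closed : ∀ x y, E x C → E y d → J x y → E y C := fun x y hx hy hxy =>
    (hC y).2 ⟨hy, fun s hs => hs.2 x y (((hC x).1 hx).2 s hs) hy hxy⟩
  refine ⟨C, fun x hx => ((hC x).1 hx).1, seed, closed, fun x hx => ?_⟩
  have hOrigin : DefinablePred E (fun x => S x ∨ ∃ u, E u C ∧ J u x) :=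
    (hS.app 0).or (((DefinableRel.mem_const 1 C).and (hJ.app 1 0)).ex.congr fun _ => by simp)
  obtain ⟨s₀, hs₀⟩ := hsep.exists_sep hOrigin d
  have hs₀C : ∀ u, E u s₀ → E u C := fun u hu => by
    obtain ⟨hud, hSu | ⟨u', hu'C, hJu'u⟩⟩ := (hs₀ u).1 hu
    exacts [seed u hud hSu, closed u' u hu'C hud hJu'u]
  have : Closed s₀ := ⟨fun z hz hSz => (hs₀ z).2 ⟨hz, Or.inl hSz⟩,
    fun u v hu hv huv => (hs₀ v).2 ⟨hv, Or.inr ⟨u, hs₀C u hu, huv⟩⟩⟩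
  exact ((hs₀ x).1 (((hC x).1 hx).2 s₀ this)).2

/-- Schröder–Bernstein for a definable injection `J` of `δ` into a subset `γ`. -/
lemma exists_intBij_of_injection (hpair : PairingAx E) (hsep : SeparationScheme E)
    (hcoll : CollectionScheme E) {γ δ : W} (hγδ : ∀ x, E x γ → E x δ)
    {J : W → W → Prop} (hJ : DefinablePred₂ E J) (tot : ∀ x, E x δ → ∃ y, J x y)
    (fnal : ∀ x y y', E x δ → J x y → J x y' → y = y')
    (maps : ∀ x y, E x δ → J x y → E y γ)
    (inj : ∀ x x' y, E x δ → E x' δ → J x y → J x' y → x = x') :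
    ∃ g, IntBij E g γ δ := by
  obtain ⟨C, hCδ, seed, closed, origin⟩ :=
    exists_closure hsep (S := fun x => ¬ E x γ) (DefinableRel.mem_const 0 γ).not hJ δ
  -- the bijection inverts `J` on `C` and is the identity off `C`
  let K : W → W → Prop := fun y x => (E x C ∧ J x y) ∨ (¬ E x C ∧ x = y)
  have hK : DefinablePred₂ E K :=
    ((DefinableRel.mem_const 1 C).and (hJ.app 1 0)).or
      ((DefinableRel.mem_const 1 C).not.and (DefinableRel.eq 1 0))
  have hKtot : ∀ y, E y γ → ∃ x, K y x := fun y hy => by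
    by_cases hyC : E y C
    · obtain hyγ | ⟨u, huC, huy⟩ := origin y hyC
      exacts [absurd hy hyγ, ⟨u, Or.inl ⟨huC, huy⟩⟩]
    · exact ⟨y, Or.inr ⟨hyC, rfl⟩⟩
  have hKfnal : ∀ y x x', E y γ → K y x → K y x' → x = x' := by
    rintro y x x' hy (⟨hx, hxy⟩ | ⟨hx, rfl⟩) (⟨hx', hx'y⟩ | ⟨hx', rfl⟩)
    · exact inj x x' y (hCδ x hx) (hCδ x' hx') hxy hx'y
    · exact absurd (closed x x' hx (hγδ x' hy) hxy) hx'
    · exact absurd (closed x' x hx' (hγδ x hy) hx'y) hx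
    · rfl
  obtain ⟨g, hg, graph⟩ := exists_isFuncOn hpair hsep hcoll hK γ hKtot hKfnal
  have hmaps : MapsInto E g δ := fun y x hyx => by
    obtain ⟨hy, ⟨hx, -⟩ | ⟨-, rfl⟩⟩ := (graph y x).1 hyx
    exacts [hCδ x hx, hγδ _ hy]
  refine ⟨g, ⟨hg, hmaps, fun y y' x hyx hy'x => ?_⟩, hg, hmaps, fun x hx => ?_⟩
  · obtain ⟨-, ⟨hxC, hxy⟩ | ⟨hxC, rfl⟩⟩ := (graph y x).1 hyx <;>
      obtain ⟨-, ⟨hxC', hxy'⟩ | ⟨hxC', rfl⟩⟩ := (graph y' x).1 hy'x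
    exacts [fnal x y y' (hCδ x hxC) hxy hxy', absurd hxC hxC', absurd hxC' hxC, rfl]
  · by_cases hxC : E x C
    · obtain ⟨y, hxy⟩ := tot x (hCδ x hxC)
      have hy := maps x y (hCδ x hxC) hxy
      exact ⟨y, hy, (graph y x).2 ⟨hy, Or.inl ⟨hxC, hxy⟩⟩⟩
    · have hxγ : E x γ := by_contra fun h => hxC (seed x hx h)
      exact ⟨x, hxγ, (graph x x).2 ⟨hxγ, Or.inr ⟨hxC, rfl⟩⟩⟩

lemma IsCardinal.not_injection_into_mem (hpair : PairingAx E) (hsep : SeparationScheme E)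
    (hcoll : CollectionScheme E) {γ δ : W} (hδ : IsCardinal E δ) (hγ : E γ δ)
    {J : W → W → Prop} (hJ : DefinablePred₂ E J) (tot : ∀ x, E x δ → ∃ y, J x y)
    (fnal : ∀ x y y', E x δ → J x y → J x y' → y = y')
    (maps : ∀ x y, E x δ → J x y → E y γ)
    (inj : ∀ x x' y, E x δ → E x' δ → J x y → J x' y → x = x') : False :=
  hδ.2 γ hγ <| exists_intBij_of_injection hpair hsep hcoll (fun x hx => hδ.1.1 γ hγ x hx) hJ
    tot fnal maps inj

end SchroederBernstein

section Antichains

variable {W : Type*} (E : W → W → Prop) (P : Set W) (le : W → W → Prop)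

def Compatible (u v : W) : Prop := ∃ w, w ∈ P ∧ le w u ∧ le w v

def IsAntichainClass (S : W → Prop) : Prop :=
  ∀ u v, S u → S v → u ≠ v → ¬ Compatible P le u v

def IsPredense (S : W → Prop) : Prop := ∀ x ∈ P, ∃ u, S u ∧ Compatible P le x u

def ValuesBelow (f ξ v : W) : Prop := ∃ u, E u ξ ∧ OPairMem E f u v

def IsGreedySeq (D : Set W) (δ f : W) : Prop :=
  IsFuncOn E f δ ∧ ∀ ξ v, E ξ δ → OPairMem E f ξ v → ¬ IsPredense P le (ValuesBelow E f ξ) →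
    v ∈ D ∧ ∀ v', ValuesBelow E f ξ v' → ¬ Compatible P le v v'

variable {E P le}

lemma Compatible.symm {u v : W} (h : Compatible P le u v) : Compatible P le v u :=
  let ⟨w, hw, hwu, hwv⟩ := h
  ⟨w, hw, hwv, hwu⟩

lemma definablePred₂_compatible [Nonempty W] (hP : DefinablePred E (· ∈ P))
    (hle : DefinablePred₂ E le) : DefinablePred₂ E (Compatible P le) :=
  ((hP.app 2).and ((hle.app 2 0).and (hle.app 2 1))).ex.congr fun _ => by simp [Compatible]

lemma definablePred_isPredense [Nonempty W] (hP : DefinablePred E (· ∈ P))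
    (hle : DefinablePred₂ E le) {S : W → W → Prop} (hS : DefinablePred₂ E S) :
    DefinablePred E (fun x => IsPredense P le (S x)) :=
  ((hP.app 1).imp ((hS.app 0 2).and ((definablePred₂_compatible hP hle).app 1 2)).ex).all.congr
    fun _ => by simp [IsPredense]

lemma exists_isGreedySeq [Nonempty W] {δ : W} {D : Set W} (hDC : DCScheme E δ)
    (hP : DefinablePred E (· ∈ P)) (hle : DefinablePred₂ E le)
    (hD : DefinablePred E (· ∈ D)) (hDP : D ⊆ P)
    (htrans : ∀ x y z, x ∈ P → y ∈ P → z ∈ P → le x y → le y z → le x z)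
    (hdense : ∀ x ∈ P, ∃ y ∈ D, le y x) : ∃ f, IsGreedySeq E P le D δ f := by
  let R : W → W → Prop := fun g y => ¬ IsPredense P le (fun v => ∃ u, OPairMem E g u v) →
    y ∈ D ∧ ∀ v, (∃ u, OPairMem E g u v) → ¬ Compatible P le y v
  have hrange : DefinablePred₂ E (fun g v => ∃ u, OPairMem E g u v) :=
    (DefinableRel.oPairMem 0 2 1).ex.congr fun _ => by simp
  have hR : DefinablePred₂ E R :=
    ((definablePred_isPredense hP hle hrange).app 0).not.imp ((hD.app 1).and
      (((hrange.app 0 2).imp ((definablePred₂_compatible hP hle).app 1 2).not).all.congr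
        fun _ => by simp))
  have tot : ∀ g, ∃ y, R g y := fun g => by
    by_cases hg : IsPredense P le (fun v => ∃ u, OPairMem E g u v)
    · exact ⟨g, fun h => absurd hg h⟩
    obtain ⟨p, hpP, hp⟩ :
        ∃ p ∈ P, ∀ v, (∃ u, OPairMem E g u v) → ¬ Compatible P le p v := by
      simpa [IsPredense] using hg
    obtain ⟨y, hyD, hyp⟩ := hdense p hpP
    refine ⟨y, fun _ => ⟨hyD, fun v hv ⟨w, hwP, hwy, hwv⟩ => hp v hv ⟨w, hwP, ?_, hwv⟩⟩⟩
    exact htrans w y p hwP (hDP hyD) hpP hwy hyp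
  obtain ⟨f, hf, hfR⟩ := hDC.exists_seq hR tot
  refine ⟨f, hf, fun ξ v hξ hv => ?_⟩
  obtain ⟨g, v', hg, hv', hgv'⟩ := hfR ξ hξ
  obtain rfl := hf.2.2 ξ v v' hv hv'
  have hrange_g : ∀ v, (∃ u, OPairMem E g u v) ↔ ValuesBelow E f ξ v := fun v => by
    simp only [hg.oPairMem_iff, ValuesBelow]
  simpa only [R, hrange_g] using hgv'

namespace IsGreedySeq

variable {D : Set W} {δ f : W}

lemma mem (hf : IsGreedySeq E P le D δ f) {ξ v : W} (hξ : E ξ δ) (hv : OPairMem E f ξ v)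
    (hopen : ¬ IsPredense P le (ValuesBelow E f ξ)) : v ∈ D :=
  (hf.2 ξ v hξ hv hopen).1

lemma incompatible (hf : IsGreedySeq E P le D δ f) (hδ : IsOrd E δ) {η η' u v : W}
    (hη : E η δ) (hη' : E η' δ) (hopen : ¬ IsPredense P le (ValuesBelow E f η))
    (hopen' : ¬ IsPredense P le (ValuesBelow E f η')) (hne : η ≠ η')
    (hu : OPairMem E f η u) (hv : OPairMem E f η' v) : ¬ Compatible P le u v := by
  rcases hδ.2 η η' hη hη' with h | rfl | h
  · exact fun huv => (hf.2 η' v hη' hv hopen').2 u ⟨η, h, hu⟩ huv.symm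
  · exact absurd rfl hne
  · exact (hf.2 η u hη hu hopen).2 v ⟨η', h, hv⟩

lemma isAntichainClass (hf : IsGreedySeq E P le D δ f) (hδ : IsOrd E δ) {ξ : W}
    (hξ : ∀ η, E η ξ → E η δ)
    (hopen : ∀ η, E η ξ → ¬ IsPredense P le (ValuesBelow E f η)) :
    IsAntichainClass P le (ValuesBelow E f ξ) := by
  rintro u v ⟨η, hη, hu⟩ ⟨η', hη', hv⟩ hne
  refine hf.incompatible hδ (hξ η hη) (hξ η' hη') (hopen η hη) (hopen η' hη') ?_ hu hv
  rintro rfl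
  exact hne (hf.1.2.2 η u v hu hv)

lemma injective (hf : IsGreedySeq E P le D δ f) (hδ : IsOrd E δ) (hDP : D ⊆ P)
    (hrefl : ∀ x ∈ P, le x x) {η η' u : W} (hη : E η δ) (hη' : E η' δ)
    (hopen : ¬ IsPredense P le (ValuesBelow E f η))
    (hopen' : ¬ IsPredense P le (ValuesBelow E f η')) (hu : OPairMem E f η u)
    (hu' : OPairMem E f η' u) : η = η' := by
  by_contra hne
  have huP := hDP (hf.mem hη hu hopen)
  exact hf.incompatible hδ hη hη' hopen hopen' hne hu hu' ⟨u, huP, hrefl u huP, hrefl u huP⟩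

/-- If no stage were predense, `f` would inject `δ` into an antichain, and the chain
condition would inject `δ` into a smaller ordinal. -/
lemma exists_isPredense [Nonempty W] (hf : IsGreedySeq E P le D δ f) (hpair : PairingAx E)
    (hunion : UnionAx E) (hsep : SeparationScheme E) (hcoll : CollectionScheme E)
    (hδ : IsCardinal E δ) (hDP : D ⊆ P) (hrefl : ∀ x ∈ P, le x x)
    (hcc : ∀ A : W, (∀ u, E u A → u ∈ P) → IsAntichainClass P le (E · A) →
      ∃ γ, E γ δ ∧ ∃ h, IntInj E h A γ) :
    ∃ ξ, E ξ δ ∧ IsPredense P le (ValuesBelow E f ξ) := by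
  by_contra! hopen
  obtain ⟨A, hA⟩ := exists_image hunion hsep f δ
  have hAD : ∀ u, E u A → u ∈ D := fun u hu => by
    obtain ⟨η, hη, hu⟩ := (hA u).1 hu
    exact hf.mem hη hu (hopen η hη)
  have hanti := hf.isAntichainClass hδ.1 (fun _ => id) hopen
  obtain ⟨γ, hγ, h, hh, hhA, hhinj⟩ := hcc A (fun u hu => hDP (hAD u hu))
    fun u v hu hv => hanti u v ((hA u).1 hu) ((hA v).1 hv)
  refine hδ.not_injection_into_mem hpair hsep hcoll hγ
    (J := fun x y => ∃ c, OPairMem E f x c ∧ OPairMem E h c y)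
    (((DefinableRel.oPairMem_const f 0 2).and (DefinableRel.oPairMem_const h 2 1)).ex.congr
      fun _ => by simp) (fun x hx => ?_) ?_ ?_ ?_
  · obtain ⟨c, hc⟩ := hf.1.2.1 x hx
    obtain ⟨y, hy⟩ := hh.2.1 c ((hA c).2 ⟨x, hx, hc⟩)
    exact ⟨y, c, hc, hy⟩
  · rintro x y y' - ⟨c, hc, hy⟩ ⟨c', hc', hy'⟩
    obtain rfl := hf.1.2.2 x c c' hc hc'
    exact hh.2.2 c y y' hy hy'
  · rintro x y - ⟨c, -, hy⟩
    exact hhA c y hy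
  · rintro x x' y hx hx' ⟨c, hc, hy⟩ ⟨c', hc', hy'⟩
    obtain rfl := hhinj c c' y hy hy'
    exact hf.injective hδ.1 hDP hrefl hx hx' (hopen x hx) (hopen x' hx') hc hc'

/-- The values of `f` below the least predense stage form the antichain. -/
lemma exists_maximal_antichain [Nonempty W] (hf : IsGreedySeq E P le D δ f)
    (hunion : UnionAx E) (hsep : SeparationScheme E) (hfound : FoundationScheme E)
    (hδ : IsOrd E δ) (hP : DefinablePred E (· ∈ P)) (hle : DefinablePred₂ E le)
    (hstage : ∃ ξ, E ξ δ ∧ IsPredense P le (ValuesBelow E f ξ)) :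
    ∃ A, (∀ u, E u A → u ∈ D) ∧ IsAntichainClass P le (E · A) ∧
      IsPredense P le (E · A) := by
  have hvalues : DefinablePred₂ E (ValuesBelow E f) :=
    ((DefinableRel.mem 2 0).and (DefinableRel.oPairMem_const f 2 1)).ex.congr
      fun _ => by simp [ValuesBelow]
  have hpredense : DefinablePred E (fun ξ => E ξ δ ∧ IsPredense P le (ValuesBelow E f ξ)) :=
    (DefinableRel.mem_const 0 δ).and ((definablePred_isPredense hP hle hvalues).app 0)
  obtain ⟨ξ, ⟨hξ, hpre⟩, hmin⟩ := hfound.exists_minimal hpredense hstage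
  have hξδ : ∀ η, E η ξ → E η δ := hδ.1 ξ hξ
  have hopen : ∀ η, E η ξ → ¬ IsPredense P le (ValuesBelow E f η) :=
    fun η hη hpre' => hmin η hη ⟨hξδ η hη, hpre'⟩
  obtain ⟨A, hA⟩ := exists_image hunion hsep f ξ
  have hanti := hf.isAntichainClass hδ hξδ hopen
  refine ⟨A, fun u hu => ?_, fun u v hu hv => hanti u v ((hA u).1 hu) ((hA v).1 hv),
    fun x hx => ?_⟩
  · obtain ⟨η, hη, hu⟩ := (hA u).1 hu
    exact hf.mem (hξδ η hη) hu (hopen η hη)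
  · obtain ⟨u, hu, hxu⟩ := hpre x hx
    exact ⟨u, (hA u).2 hu, hxu⟩

end IsGreedySeq

end Antichains

theorem denseClass_contains_set_maximal_antichain_general {W : Type*} (E : W → W → Prop)
    (hW : ZFCminus E) (δ : W) (hδ : IsRegular' E δ) (hDC : DCScheme E δ)
    (P : Set W) (le : W → W → Prop)
    (hPdef : ∃ (n : ℕ) (φ : setLang.BoundedFormula Empty (n + 1)) (p : Fin n → W),
      P = ClassOf E φ p)
    (hledef : ∃ (n : ℕ) (φ : setLang.BoundedFormula Empty (n + 2)) (p : Fin n → W),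
      ∀ x y, le x y ↔ Sat E φ (Fin.snoc (Fin.snoc p x) y))
    (hrefl : ∀ x ∈ P, le x x)
    (htrans : ∀ x y z, x ∈ P → y ∈ P → z ∈ P → le x y → le y z → le x z)
    (hcc : ∀ A : W, (∀ u, E u A → u ∈ P) →
      (∀ u v, E u A → E v A → u ≠ v → ¬ ∃ w, w ∈ P ∧ le w u ∧ le w v) →
      ∃ γ, E γ δ ∧ ∃ f, IntInj E f A γ) :
    ∀ D : Set W,
      (∃ (n : ℕ) (φ : setLang.BoundedFormula Empty (n + 1)) (p : Fin n → W),
        D = ClassOf E φ p) →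
      D ⊆ P → (∀ x ∈ P, ∃ y ∈ D, le y x) →
      ∃ A : W, (∀ u, E u A → u ∈ D) ∧
        (∀ u v, E u A → E v A → u ≠ v → ¬ ∃ w, w ∈ P ∧ le w u ∧ le w v) ∧
        (∀ x ∈ P, ∃ u, E u A ∧ ∃ w, w ∈ P ∧ le w x ∧ le w u) := by
  intro D hDdef hDP hdense
  obtain ⟨-, ⟨e, -⟩, hpair, hunion, -, hfound, hsep, hcoll, -⟩ := hW
  have : Nonempty W := ⟨e⟩
  have hP : DefinablePred E (· ∈ P) := by
    obtain ⟨n, φ, p, rfl⟩ := hPdef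
    exact definablePred_classOf φ p
  have hD : DefinablePred E (· ∈ D) := by
    obtain ⟨n, φ, p, rfl⟩ := hDdef
    exact definablePred_classOf φ p
  have hle : DefinablePred₂ E le := by
    obtain ⟨n, φ, p, hφ⟩ := hledef
    exact (definablePred₂_sat φ p).congr fun xs => hφ _ _
  obtain ⟨f, hf⟩ := exists_isGreedySeq hDC hP hle hD hDP htrans hdense
  exact hf.exists_maximal_antichain hunion hsep hfound hδ.1.1 hP hle
    (hf.exists_isPredense hpair hunion hsep hcoll hδ.1 hDP hrefl hcc)

/-- Over ZFC⁻ with the DC_δ-scheme for a regular cardinal `δ`, every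
class partial order `P` with the `δ`-chain condition has, inside each dense
subclass, a set-sized maximal antichain. -/
theorem denseClass_contains_set_maximal_antichain {W : Type*} (E : W → W → Prop)
    (hW : ZFCminus E) (δ : W) (hδ : IsRegular' E δ) (hDC : DCScheme E δ)
    (P : Set W) (le : W → W → Prop)
    (hPdef : ∃ (n : ℕ) (φ : setLang.BoundedFormula Empty (n + 1)) (p : Fin n → W),
      P = ClassOf E φ p)
    (hledef : ∃ (n : ℕ) (φ : setLang.BoundedFormula Empty (n + 2)) (p : Fin n → W),
      ∀ x y, le x y ↔ Sat E φ (Fin.snoc (Fin.snoc p x) y))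
    (hrefl : ∀ x ∈ P, le x x)
    (htrans : ∀ x y z, x ∈ P → y ∈ P → z ∈ P → le x y → le y z → le x z)
    (hantisymm : ∀ x y, x ∈ P → y ∈ P → le x y → le y x → x = y)
    (hcc : ∀ A : W, (∀ u, E u A → u ∈ P) →
      (∀ u v, E u A → E v A → u ≠ v → ¬ ∃ w, w ∈ P ∧ le w u ∧ le w v) →
      ∃ γ, E γ δ ∧ ∃ f, IntInj E f A γ) :
    ∀ D : Set W,
      (∃ (n : ℕ) (φ : setLang.BoundedFormula Empty (n + 1)) (p : Fin n → W),
        D = ClassOf E φ p) →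
      D ⊆ P → (∀ x ∈ P, ∃ y ∈ D, le y x) →
      ∃ A : W, (∀ u, E u A → u ∈ D) ∧
        (∀ u v, E u A → E v A → u ≠ v → ¬ ∃ w, w ∈ P ∧ le w u ∧ le w v) ∧
        (∀ x ∈ P, ∃ u, E u A ∧ ∃ w, w ∈ P ∧ le w x ∧ le w u) :=
  denseClass_contains_set_maximal_antichain_general E hW δ hδ hDC P le hPdef hledef hrefl htrans hcc
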